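/- arXiv:2104.14404 — 6 statements merged into one kernel-verified Lean document; each statement's English description precedes it below -/
import Mathlib

section
/- Let G = (V,E) be a finite simple graph with every vertex of positive degree, and suppose MaxCut(G) = (1−ε)|E| for some ε ∈ [0,1]. If x ∈ ℝ^n is a solution of (QP), i.e. x is feasible and minimizes ⟨x, D^{-1} A D^{-1} x⟩ over the feasible set, then ⟨x, D^{-1} A D^{-1} x⟩ ≤ 2ε|E|. -/
open Finset Matrix BigOperators

variable {V : Type*} [Fintype V] [DecidableEq V]

/-- `#E(A,B)`: the number of edges of `G` with one endpoint in `A` and the other in `B`. -/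
def edgesBetween (G : SimpleGraph V) [DecidableRel G.Adj] (A B : Finset V) : ℕ :=
  (G.edgeFinset.filter fun e => ∃ a ∈ A, ∃ b ∈ B, e = s(a, b)).card

/-- `#E(S,S)`: the number of edges of `G` with both endpoints in `S`. -/
def edgesWithin (G : SimpleGraph V) [DecidableRel G.Adj] (S : Finset V) : ℕ :=
  (G.edgeFinset.filter fun e => ∀ v ∈ e, v ∈ S).card

/-- `MaxCut(G)`: the maximum of `#E(S, V∖S)` over all subsets `S` of the vertex set. -/
def maxCut (G : SimpleGraph V) [DecidableRel G.Adj] : ℕ :=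
  Finset.univ.sup fun S : Finset V => edgesBetween G S Sᶜ

/-- The quadratic form `⟨x, D⁻¹ A D⁻¹ x⟩`, where `D` is the diagonal matrix of degrees and
`A` is the adjacency matrix. -/
noncomputable def qform (G : SimpleGraph V) [DecidableRel G.Adj] (x : V → ℝ) : ℝ :=
  x ⬝ᵥ (((Matrix.diagonal fun v => (G.degree v : ℝ))⁻¹ * G.adjMatrix ℝ *
      (Matrix.diagonal fun v => (G.degree v : ℝ))⁻¹) *ᵥ x)

/-- `x` is feasible for `(QP)`: `0 ≤ x_v ≤ deg(v)` for all `v` and `∑ x_v ≥ |E|`. -/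
def feasible (G : SimpleGraph V) [DecidableRel G.Adj] (x : V → ℝ) : Prop :=
  (∀ v, 0 ≤ x v ∧ x v ≤ G.degree v) ∧ (G.edgeFinset.card : ℝ) ≤ ∑ v, x v

/-- `x` is a solution of `(QP)`: feasible and minimizing the quadratic form
over the feasible set. -/
def isQPSolution (G : SimpleGraph V) [DecidableRel G.Adj] (x : V → ℝ) : Prop :=
  feasible G x ∧ ∀ y, feasible G y → qform G x ≤ qform G y

/-! ### Auxiliary lemmas -/

/-- The number of adjacent ordered pairs in `A × B`. -/
def adjPairs (G : SimpleGraph V) [DecidableRel G.Adj] (A B : Finset V) : ℕ :=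
  ∑ u ∈ A, ∑ v ∈ B, if G.Adj u v then 1 else 0

lemma adjPairs_symm (G : SimpleGraph V) [DecidableRel G.Adj] (A B : Finset V) :
    adjPairs G A B = adjPairs G B A := by
  rw [adjPairs, Finset.sum_comm, adjPairs]
  simp_rw [G.adj_comm]

lemma adjPairs_cross (G : SimpleGraph V) [DecidableRel G.Adj] (S : Finset V) :
    adjPairs G S Sᶜ = edgesBetween G S Sᶜ := by
  rw [adjPairs, edgesBetween, ← Finset.sum_product', ← Finset.card_filter]
  apply Finset.card_bij (fun p _ => s(p.1, p.2))
  · rintro ⟨a, b⟩ hp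
    simp only [Finset.mem_filter, Finset.mem_product] at hp
    simp only [Finset.mem_filter, SimpleGraph.mem_edgeFinset, SimpleGraph.mem_edgeSet]
    exact ⟨hp.2, a, hp.1.1, b, hp.1.2, rfl⟩
  · rintro ⟨a, b⟩ hp ⟨c, d⟩ hq h
    simp only [Finset.mem_filter, Finset.mem_product, Finset.mem_compl] at hp hq
    rw [Sym2.eq_iff] at h
    rcases h with ⟨rfl, rfl⟩ | ⟨rfl, rfl⟩
    · rfl
    · exact absurd hp.1.1 hq.1.2
  · intro e he
    simp only [Finset.mem_filter] at he
    obtain ⟨hadj, a, ha, b, hb, rfl⟩ := he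
    refine ⟨(a, b), ?_, rfl⟩
    simp only [Finset.mem_filter, Finset.mem_product]
    refine ⟨⟨ha, hb⟩, ?_⟩
    rwa [SimpleGraph.mem_edgeFinset, SimpleGraph.mem_edgeSet] at hadj

lemma degree_eq_sum (G : SimpleGraph V) [DecidableRel G.Adj] (u : V) :
    G.degree u = ∑ v, if G.Adj u v then 1 else 0 := by
  rw [← SimpleGraph.card_neighborFinset_eq_degree, SimpleGraph.neighborFinset_eq_filter,
    Finset.card_filter]

lemma adjPairs_total (G : SimpleGraph V) [DecidableRel G.Adj] :
    adjPairs G univ univ = 2 * G.edgeFinset.card := by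
  rw [adjPairs]
  simp_rw [← degree_eq_sum]
  exact G.sum_degrees_eq_twice_card_edges

lemma adjPairs_compl_right (G : SimpleGraph V) [DecidableRel G.Adj] (A S : Finset V) :
    adjPairs G A S + adjPairs G A Sᶜ = adjPairs G A univ := by
  simp_rw [adjPairs, ← Finset.sum_add_distrib, Finset.sum_add_sum_compl]

lemma adjPairs_compl_left (G : SimpleGraph V) [DecidableRel G.Adj] (S A : Finset V) :
    adjPairs G S A + adjPairs G Sᶜ A = adjPairs G univ A :=
  Finset.sum_add_sum_compl S _

lemma sum_degree_eq_adjPairs (G : SimpleGraph V) [DecidableRel G.Adj] (S : Finset V) :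
    ∑ v ∈ S, G.degree v = adjPairs G S univ := by
  rw [adjPairs]
  exact Finset.sum_congr rfl fun v _ => degree_eq_sum G v

lemma qform_indicator (G : SimpleGraph V) [DecidableRel G.Adj]
    (hdeg : ∀ v, 0 < G.degree v) (S : Finset V) :
    qform G (fun v => if v ∈ S then (G.degree v : ℝ) else 0) = adjPairs G S S := by
  have hne : ∀ v, ((G.degree v : ℝ)) ≠ 0 := fun v => by
    exact_mod_cast (hdeg v).ne'
  have hinv : (Matrix.diagonal fun v => (G.degree v : ℝ))⁻¹
      = Matrix.diagonal fun v => ((G.degree v : ℝ))⁻¹ := by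
    apply Matrix.inv_eq_right_inv
    rw [Matrix.diagonal_mul_diagonal]
    have h1 : (fun v => (G.degree v : ℝ) * ((G.degree v : ℝ))⁻¹) = fun _ => 1 := by
      funext v; exact mul_inv_cancel₀ (hne v)
    rw [h1, Matrix.diagonal_one]
  rw [qform, hinv, adjPairs]
  push_cast
  have step1 : ((fun v => if v ∈ S then (G.degree v : ℝ) else 0) ⬝ᵥ
      ((Matrix.diagonal fun v => ((G.degree v : ℝ))⁻¹) * G.adjMatrix ℝ *
        (Matrix.diagonal fun v => ((G.degree v : ℝ))⁻¹)) *ᵥ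
        fun v => if v ∈ S then (G.degree v : ℝ) else 0)
      = ∑ u : V, ∑ v : V, (if u ∈ S then (1:ℝ) else 0) *
          ((if G.Adj u v then (1:ℝ) else 0) * (if v ∈ S then (1:ℝ) else 0)) := by
    simp only [dotProduct, mulVec, Matrix.mul_diagonal, Matrix.diagonal_mul,
      SimpleGraph.adjMatrix_apply, Finset.mul_sum]
    refine Finset.sum_congr rfl fun u _ => Finset.sum_congr rfl fun v _ => ?_
    by_cases hu : u ∈ S
    · by_cases hv : v ∈ S
      · simp only [hu, hv, if_true, one_mul, mul_one]
        rcases em (G.Adj u v) with h | h <;> simp only [h, if_true, if_false]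
        · have e1 : (G.degree u : ℝ) * (((G.degree u : ℝ))⁻¹ * 1 * ((G.degree v : ℝ))⁻¹ *
              (G.degree v : ℝ))
              = ((G.degree u : ℝ) * ((G.degree u : ℝ))⁻¹) *
                (((G.degree v : ℝ))⁻¹ * (G.degree v : ℝ)) := by ring
          rw [e1, mul_inv_cancel₀ (hne u), inv_mul_cancel₀ (hne v), one_mul]
        · simp
      · simp [hv]
    · simp [hu]
  rw [step1]
  have h1 : ∀ u : V, (∑ v ∈ S, if G.Adj u v then (1:ℝ) else 0)
      = ∑ v : V, (if G.Adj u v then (1:ℝ) else 0) * (if v ∈ S then 1 else 0) := by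
    intro u
    simp_rw [mul_ite, mul_one, mul_zero, Finset.sum_ite_mem, Finset.univ_inter]
  have h2 : (∑ u ∈ S, ∑ v ∈ S, if G.Adj u v then (1:ℝ) else 0)
      = ∑ u : V, (if u ∈ S then (1:ℝ) else 0) *
          ∑ v : V, (if G.Adj u v then (1:ℝ) else 0) * (if v ∈ S then 1 else 0) := by
    simp_rw [← h1, ite_mul, one_mul, zero_mul, Finset.sum_ite_mem, Finset.univ_inter]
  rw [h2]
  refine Finset.sum_congr rfl fun u _ => ?_
  rw [Finset.mul_sum]

lemma indicator_feasible (G : SimpleGraph V) [DecidableRel G.Adj] (T : Finset V)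
    (hdom : adjPairs G Tᶜ Tᶜ ≤ adjPairs G T T) :
    feasible G (fun v => if v ∈ T then (G.degree v : ℝ) else 0) := by
  constructor
  · intro v
    by_cases hv : v ∈ T <;> simp [hv]
  · have key : G.edgeFinset.card ≤ ∑ v ∈ T, G.degree v := by
      have h2 : 2 * G.edgeFinset.card ≤ 2 * ∑ v ∈ T, G.degree v := by
        rw [← adjPairs_total, ← adjPairs_compl_left G T univ, sum_degree_eq_adjPairs]
        have e1 : adjPairs G T univ = adjPairs G T T + adjPairs G T Tᶜ :=
          (adjPairs_compl_right G T T).symm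
        have e2 : adjPairs G Tᶜ univ = adjPairs G Tᶜ T + adjPairs G Tᶜ Tᶜ :=
          (adjPairs_compl_right G Tᶜ T).symm
        have e3 : adjPairs G Tᶜ T = adjPairs G T Tᶜ := adjPairs_symm G Tᶜ T
        omega
      omega
    have : (∑ v : V, if v ∈ T then (G.degree v : ℝ) else 0) = ∑ v ∈ T, (G.degree v : ℝ) := by
      rw [Finset.sum_ite_mem, Finset.univ_inter]
    rw [this, ← Nat.cast_sum]
    exact_mod_cast key

lemma adjPairs_le (G : SimpleGraph V) [DecidableRel G.Adj] (T : Finset V)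
    (hcut : adjPairs G T Tᶜ = maxCut G) :
    adjPairs G T T + 2 * maxCut G ≤ 2 * G.edgeFinset.card := by
  have e0 : adjPairs G univ univ = 2 * G.edgeFinset.card := adjPairs_total G
  have e1 : adjPairs G T univ + adjPairs G Tᶜ univ = adjPairs G univ univ :=
    adjPairs_compl_left G T univ
  have e2 : adjPairs G T T + adjPairs G T Tᶜ = adjPairs G T univ :=
    adjPairs_compl_right G T T
  have e3 : adjPairs G Tᶜ T + adjPairs G Tᶜ Tᶜ = adjPairs G Tᶜ univ :=
    adjPairs_compl_right G Tᶜ T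
  have e4 : adjPairs G Tᶜ T = adjPairs G T Tᶜ := adjPairs_symm G Tᶜ T
  omega

/-- if `MaxCut(G) = (1-ε)|E|` with `ε ∈ [0,1]` and `x` solves `(QP)`,
then `⟨x, D⁻¹ A D⁻¹ x⟩ ≤ 2ε|E|`. -/
theorem qform_of_solution_le (G : SimpleGraph V) [DecidableRel G.Adj]
    (hdeg : ∀ v, 0 < G.degree v) (ε : ℝ) (hε0 : 0 ≤ ε) (hε1 : ε ≤ 1)
    (hmc : (maxCut G : ℝ) = (1 - ε) * (G.edgeFinset.card : ℝ))
    (x : V → ℝ) (hx : isQPSolution G x) :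
    qform G x ≤ 2 * ε * (G.edgeFinset.card : ℝ) := by
  -- a maximizing cut
  obtain ⟨S, -, hS⟩ := Finset.exists_mem_eq_sup (Finset.univ : Finset (Finset V))
    Finset.univ_nonempty (fun S : Finset V => edgesBetween G S Sᶜ)
  have hScut : adjPairs G S Sᶜ = maxCut G := by
    rw [adjPairs_cross, maxCut, hS]
  -- choose the side with at least as many internal edges
  obtain ⟨T, hdom, hcut⟩ : ∃ T : Finset V, adjPairs G Tᶜ Tᶜ ≤ adjPairs G T T ∧
      adjPairs G T Tᶜ = maxCut G := by
    rcases le_total (adjPairs G Sᶜ Sᶜ) (adjPairs G S S) with h | h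
    · exact ⟨S, h, hScut⟩
    · refine ⟨Sᶜ, ?_, ?_⟩
      · rwa [compl_compl]
      · rw [compl_compl, adjPairs_symm]
        exact hScut
    -- the comparison vector
  set y : V → ℝ := fun v => if v ∈ T then (G.degree v : ℝ) else 0 with hy
  have hfeas : feasible G y := indicator_feasible G T hdom
  have hq : qform G y = adjPairs G T T := qform_indicator G hdeg T
  have hle : qform G x ≤ qform G y := hx.2 y hfeas
  have hbound : adjPairs G T T + 2 * maxCut G ≤ 2 * G.edgeFinset.card :=
    adjPairs_le G T hcut
  have hboundR : (adjPairs G T T : ℝ) + 2 * (maxCut G : ℝ) ≤ 2 * (G.edgeFinset.card : ℝ) := by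
    exact_mod_cast hbound
  calc qform G x ≤ qform G y := hle
    _ = adjPairs G T T := hq
    _ ≤ 2 * (G.edgeFinset.card : ℝ) - 2 * (maxCut G : ℝ) := by linarith
    _ = 2 * ε * (G.edgeFinset.card : ℝ) := by rw [hmc]; ring
end

section
/- Let G = (V,E) be a finite simple graph with every vertex of positive degree, let 0 < η < 1, let x ∈ ℝ^n satisfy 0 ≤ x_i ≤ deg(v_i) for all i and Σ_{i=1}^n x_i ≥ |E|, and define C = {v ∈ V : x_v ≥ η · deg(v)}. Then Σ_{v ∈ C} deg(v) ≥ ((1 − 2η)/(1 − η)) · |E|. -/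
open Finset Matrix BigOperators

variable {V : Type*} [Fintype V] [DecidableEq V]

/-- for feasible `x` and `C = {v : x_v ≥ η·deg v}`,
`∑_{v ∈ C} deg v ≥ ((1-2η)/(1-η))·|E|`. -/
theorem heavy_set_degree_sum (G : SimpleGraph V) [DecidableRel G.Adj]
    (hdeg : ∀ v, 0 < G.degree v) (η : ℝ) (hη0 : 0 < η) (hη1 : η < 1)
    (x : V → ℝ) (hx1 : ∀ v, 0 ≤ x v ∧ x v ≤ (G.degree v : ℝ))
    (hx2 : (G.edgeFinset.card : ℝ) ≤ ∑ v, x v) :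
    (1 - 2 * η) / (1 - η) * (G.edgeFinset.card : ℝ) ≤
      ∑ v ∈ Finset.univ.filter (fun v => η * (G.degree v : ℝ) ≤ x v), (G.degree v : ℝ) := by
  classical
  set p := fun v => η * (G.degree v : ℝ) ≤ x v with hp
  set S := ∑ v ∈ Finset.univ.filter p, (G.degree v : ℝ) with hS
  set T := ∑ v ∈ Finset.univ.filter (fun v => ¬ p v), (G.degree v : ℝ) with hT
  have hdegsum : S + T = 2 * (G.edgeFinset.card : ℝ) := by
    have := G.sum_degrees_eq_twice_card_edges
    have h2 : ∑ v, (G.degree v : ℝ) = 2 * (G.edgeFinset.card : ℝ) := by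
      exact_mod_cast congrArg (Nat.cast : ℕ → ℝ) this
    rw [hS, hT, Finset.sum_filter_add_sum_filter_not, h2]
  have hxle : ∑ v, x v ≤ S + η * T := by
    rw [← Finset.sum_filter_add_sum_filter_not Finset.univ p x, hS, hT,
      Finset.mul_sum]
    gcongr with v hv v hv
    · exact (hx1 v).2
    · simp only [Finset.mem_filter] at hv
      exact le_of_lt (not_le.mp hv.2)
  have hkey : (G.edgeFinset.card : ℝ) ≤ S + η * T := le_trans hx2 hxle
  have hTpos : 0 ≤ T := Finset.sum_nonneg fun v _ => by positivity
  have h1η : (0:ℝ) < 1 - η := by linarith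
  rw [div_mul_eq_mul_div, div_le_iff₀ h1η]
  nlinarith [hkey, hdegsum]
end

section
/- Let G = (V,E) be a finite simple graph with every vertex of positive degree, let 0 < η < 1 and ε ≥ 0, and let x ∈ ℝ^n have nonnegative entries with ⟨x, D^{-1} A D^{-1} x⟩ ≤ 2ε|E|. Define C = {v ∈ V : x_v ≥ η · deg(v)}. Then the number of edges with both endpoints in C satisfies #E(C,C) ≤ (ε/η²) · |E|. -/
open Finset Matrix BigOperators

variable {V : Type*} [Fintype V] [DecidableEq V]

def restrictG (G : SimpleGraph V) (S : Finset V) : SimpleGraph V where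
  Adj u v := G.Adj u v ∧ u ∈ S ∧ v ∈ S
  symm := ⟨fun u v h => ⟨h.1.symm, h.2.2, h.2.1⟩⟩
  loopless := ⟨fun v h => G.loopless.irrefl v h.1⟩

instance (G : SimpleGraph V) [DecidableRel G.Adj] (S : Finset V) :
    DecidableRel (restrictG G S).Adj := fun _ _ => instDecidableAnd

lemma restrictG_edgeFinset (G : SimpleGraph V) [DecidableRel G.Adj] (S : Finset V) :
    (restrictG G S).edgeFinset = G.edgeFinset.filter (fun e => ∀ v ∈ e, v ∈ S) := by
  ext e
  induction e using Sym2.ind with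
  | _ a b =>
    simp [SimpleGraph.mem_edgeFinset, restrictG, Sym2.forall_mem_pair, and_assoc]
    exact SimpleGraph.mem_edgeFinset.trans (SimpleGraph.mem_edgeSet _)


/-- if `x ≥ 0` and `⟨x, D⁻¹ A D⁻¹ x⟩ ≤ 2ε|E|`, then for
`C = {v : x_v ≥ η·deg v}` one has `#E(C,C) ≤ (ε/η²)·|E|`. -/
theorem edges_within_heavy_set_le (G : SimpleGraph V) [DecidableRel G.Adj]
    (hdeg : ∀ v, 0 < G.degree v) (η ε : ℝ) (hη0 : 0 < η) (hη1 : η < 1) (hε : 0 ≤ ε)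
    (x : V → ℝ) (hx : ∀ v, 0 ≤ x v)
    (hq : qform G x ≤ 2 * ε * (G.edgeFinset.card : ℝ)) :
    (edgesWithin G (Finset.univ.filter (fun v => η * (G.degree v : ℝ) ≤ x v)) : ℝ) ≤
      ε / η ^ 2 * (G.edgeFinset.card : ℝ) := by
  set C : Finset V := Finset.univ.filter (fun v => η * (G.degree v : ℝ) ≤ x v) with hC
  set H : SimpleGraph V := restrictG G C with hH
  have hd : ∀ v, (0:ℝ) < (G.degree v : ℝ) := fun v => by exact_mod_cast hdeg v
  -- qform as a double sum
  have hqform : qform G x = ∑ u, ∑ v, x u *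
      (((G.degree u : ℝ))⁻¹ * (if G.Adj u v then (1:ℝ) else 0) * ((G.degree v : ℝ))⁻¹ * x v) := by
    have hdiag : (Matrix.diagonal fun v => (G.degree v : ℝ))⁻¹
        = Matrix.diagonal (fun v => ((G.degree v : ℝ))⁻¹) := by
      apply Matrix.inv_eq_right_inv
      rw [Matrix.diagonal_mul_diagonal]
      have he : (fun i => (G.degree i : ℝ) * ((G.degree i : ℝ))⁻¹) = fun _ => (1:ℝ) := by
        funext v; exact mul_inv_cancel₀ (hd v).ne'
      rw [he, Matrix.diagonal_one]
    unfold qform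
    rw [hdiag]
    simp only [dotProduct, mulVec, dotProduct, Matrix.mul_diagonal, Matrix.diagonal_mul,
      SimpleGraph.adjMatrix_apply, Finset.mul_sum]
  -- lower bound each term
  have hlow : ∑ u, ∑ v, (if H.Adj u v then (η^2:ℝ) else 0) ≤ qform G x := by
    rw [hqform]
    refine Finset.sum_le_sum fun u _ => Finset.sum_le_sum fun v _ => ?_
    by_cases h : H.Adj u v
    · rw [if_pos h]
      obtain ⟨hadj, hu, hv⟩ := h
      rw [if_pos hadj]
      have hxu : η * (G.degree u : ℝ) ≤ x u := (Finset.mem_filter.mp hu).2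
      have hxv : η * (G.degree v : ℝ) ≤ x v := (Finset.mem_filter.mp hv).2
      have h1 : η ≤ x u * ((G.degree u : ℝ))⁻¹ := by
        rw [← div_eq_mul_inv, le_div_iff₀ (hd u)]; linarith
      have h2 : η ≤ x v * ((G.degree v : ℝ))⁻¹ := by
        rw [← div_eq_mul_inv, le_div_iff₀ (hd v)]; linarith
      calc η^2 = η * η := sq η
        _ ≤ (x u * ((G.degree u : ℝ))⁻¹) * (x v * ((G.degree v : ℝ))⁻¹) := by
            exact mul_le_mul h1 h2 (le_of_lt hη0)
              (mul_nonneg (hx u) (inv_nonneg.mpr (hd u).le))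
        _ = x u * (((G.degree u : ℝ))⁻¹ * 1 * ((G.degree v : ℝ))⁻¹ * x v) := by ring
    · rw [if_neg h]
      have h0 : (0:ℝ) ≤ (if G.Adj u v then (1:ℝ) else 0) := by split <;> norm_num
      exact mul_nonneg (hx u) (mul_nonneg (mul_nonneg (mul_nonneg
        (inv_nonneg.mpr (hd u).le) h0) (inv_nonneg.mpr (hd v).le)) (hx v))
  -- the double sum counts degrees of H
  have hcount : ∑ u, ∑ v, (if H.Adj u v then (η^2:ℝ) else 0)
      = η^2 * (2 * (edgesWithin G C : ℝ)) := by
    have h1 : ∀ u, ∑ v, (if H.Adj u v then (η^2:ℝ) else 0) = η^2 * (H.degree u : ℝ) := by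
      intro u
      rw [← Finset.sum_filter, Finset.sum_const, nsmul_eq_mul, mul_comm]
      congr 1
      rw [SimpleGraph.degree, SimpleGraph.neighborFinset_eq_filter]
    have h2 : (H.edgeFinset.card : ℕ) = edgesWithin G C := by
      rw [edgesWithin, ← restrictG_edgeFinset]
    have h3 : ∑ u, H.degree u = 2 * H.edgeFinset.card :=
      SimpleGraph.sum_degrees_eq_twice_card_edges H
    simp only [h1, ← Finset.mul_sum]
    congr 1
    rw [← h2]
    exact_mod_cast h3
  have key : η^2 * (2 * (edgesWithin G C : ℝ)) ≤ 2 * ε * (G.edgeFinset.card : ℝ) := by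
    rw [← hcount]; exact hlow.trans hq
  rw [div_mul_eq_mul_div, le_div_iff₀ (by positivity : (0:ℝ) < η^2)]
  nlinarith
end

section
/- Let G = (V,E) be a finite simple graph with every vertex of positive degree, let 0 < η < 1 and ε ≥ 0, and let x ∈ ℝ^n be feasible for (QP) with ⟨x, D^{-1} A D^{-1} x⟩ ≤ 2ε|E|. Define C = {v ∈ V : x_v ≥ η · deg(v)}. Then the cut determined by C satisfies #E(C, V∖C) ≥ ((1 − 2η)/(1 − η) − 2ε/η²) · |E|. -/
open Finset Matrix BigOperators

variable {V : Type*} [Fintype V] [DecidableEq V]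

section Aux

lemma sum_ind (C : Finset V) (g : V → ℕ) :
    ∑ u, (if u ∈ C then g u else 0) = ∑ u ∈ C, g u := by
  rw [Finset.sum_ite_mem, Finset.univ_inter]

lemma ite_sum (p : Prop) [Decidable p] (s : Finset V) (f : V → ℕ) :
    ∑ u ∈ s, (if p then f u else 0) = if p then ∑ u ∈ s, f u else 0 := by
  split_ifs <;> simp

lemma deg_eq (H : SimpleGraph V) [DecidableRel H.Adj] (u : V) :
    H.degree u = ∑ v, (if H.Adj u v then 1 else 0) := by
  rw [SimpleGraph.degree, SimpleGraph.neighborFinset_eq_filter, Finset.card_filter]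

lemma pair_count (H : SimpleGraph V) [DecidableRel H.Adj] :
    ∑ u, ∑ v, (if H.Adj u v then 1 else 0) = 2 * H.edgeFinset.card := by
  rw [← H.sum_degrees_eq_twice_card_edges]
  exact Finset.sum_congr rfl fun u _ => (deg_eq H u).symm

lemma within_count (G : SimpleGraph V) [DecidableRel G.Adj] (C : Finset V) :
    ∑ u ∈ C, ∑ v ∈ C, (if G.Adj u v then 1 else 0) = 2 * edgesWithin G C := by
  classical
  set H : SimpleGraph V :=
    { Adj := fun u v => G.Adj u v ∧ u ∈ C ∧ v ∈ C
      symm := by constructor; intro u v ⟨h, hu, hv⟩; exact ⟨h.symm, hv, hu⟩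
      loopless := by constructor; intro u ⟨h, _⟩; exact G.loopless.irrefl u h } with hH
  have hdec : DecidableRel H.Adj := fun u v => instDecidableAnd
  have key : ∀ u v, (if H.Adj u v then (1:ℕ) else 0)
      = if u ∈ C then (if v ∈ C then (if G.Adj u v then 1 else 0) else 0) else 0 := by
    intro u v
    by_cases h1 : u ∈ C <;> by_cases h2 : v ∈ C <;> simp [hH, h1, h2]
  have h1 : ∑ u, ∑ v, (if H.Adj u v then (1:ℕ) else 0)
      = ∑ u ∈ C, ∑ v ∈ C, (if G.Adj u v then 1 else 0) := by
    simp only [key, ite_sum, sum_ind]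
  have h2 : H.edgeFinset = G.edgeFinset.filter (fun e => ∀ v ∈ e, v ∈ C) := by
    ext e
    refine Sym2.inductionOn e fun u v => ?_
    simp only [Finset.mem_filter, SimpleGraph.mem_edgeFinset, SimpleGraph.mem_edgeSet, hH,
      Sym2.mem_iff]
    constructor
    · rintro ⟨h, hu, hv⟩
      exact ⟨h, by rintro w (rfl | rfl) <;> assumption⟩
    · rintro ⟨h, hw⟩
      exact ⟨h, hw u (Or.inl rfl), hw v (Or.inr rfl)⟩
  rw [← h1, pair_count, edgesWithin, ← h2]

lemma between_count (G : SimpleGraph V) [DecidableRel G.Adj] (C : Finset V) :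
    ∑ u ∈ C, ∑ v ∈ Cᶜ, (if G.Adj u v then 1 else 0) = edgesBetween G C Cᶜ := by
  classical
  set H : SimpleGraph V :=
    { Adj := fun u v => G.Adj u v ∧ ((u ∈ C ∧ v ∈ Cᶜ) ∨ (v ∈ C ∧ u ∈ Cᶜ))
      symm := by constructor; intro u v ⟨h, h2⟩; exact ⟨h.symm, h2.symm⟩
      loopless := by
        constructor; intro u ⟨h, _⟩; exact G.loopless.irrefl u h } with hH
  have hdec : DecidableRel H.Adj := fun u v => instDecidableAnd
  have key : ∀ u v, (if H.Adj u v then (1:ℕ) else 0)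
      = (if u ∈ C then (if v ∈ Cᶜ then (if G.Adj u v then 1 else 0) else 0) else 0)
      + (if v ∈ C then (if u ∈ Cᶜ then (if G.Adj u v then 1 else 0) else 0) else 0) := by
    intro u v
    by_cases h1 : u ∈ C <;> by_cases h2 : v ∈ C <;>
      simp [hH, h1, h2, Finset.mem_compl]
  have h1 : ∑ u, ∑ v, (if H.Adj u v then (1:ℕ) else 0)
      = 2 * ∑ u ∈ C, ∑ v ∈ Cᶜ, (if G.Adj u v then 1 else 0) := by
    simp only [key, Finset.sum_add_distrib]
    rw [two_mul]
    congr 1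
    · simp only [ite_sum, sum_ind]
    · rw [Finset.sum_comm]
      simp only [ite_sum, sum_ind]
      refine Finset.sum_congr rfl fun v _ => Finset.sum_congr rfl fun u _ => ?_
      by_cases h : G.Adj u v
      · rw [if_pos h, if_pos h.symm]
      · rw [if_neg h, if_neg fun h' => h h'.symm]
  have h2 : H.edgeFinset = G.edgeFinset.filter (fun e => ∃ a ∈ C, ∃ b ∈ Cᶜ, e = s(a, b)) := by
    ext e
    refine Sym2.inductionOn e fun u v => ?_
    simp only [Finset.mem_filter, SimpleGraph.mem_edgeFinset, SimpleGraph.mem_edgeSet, hH]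
    constructor
    · rintro ⟨h, (⟨hu, hv⟩ | ⟨hv, hu⟩)⟩
      · exact ⟨h, u, hu, v, hv, rfl⟩
      · exact ⟨h, v, hv, u, hu, Sym2.eq_swap.symm⟩
    · rintro ⟨h, a, ha, b, hb, he⟩
      refine ⟨h, ?_⟩
      rw [Sym2.eq_iff] at he
      rcases he with ⟨rfl, rfl⟩ | ⟨rfl, rfl⟩
      · exact Or.inl ⟨ha, hb⟩
      · exact Or.inr ⟨ha, hb⟩
  have := pair_count H
  rw [h1, h2] at this
  rw [edgesBetween]
  omega

lemma qform_eq (G : SimpleGraph V) [DecidableRel G.Adj] (hdeg : ∀ v, 0 < G.degree v)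
    (x : V → ℝ) :
    qform G x = ∑ u, ∑ v,
      (if G.Adj u v then (x u / (G.degree u : ℝ)) * (x v / (G.degree v : ℝ)) else 0) := by
  have hne : ∀ v, ((G.degree v : ℝ)) ≠ 0 := fun v =>
    Nat.cast_ne_zero.mpr (hdeg v).ne'
  have hinv : (Matrix.diagonal fun v => (G.degree v : ℝ))⁻¹
      = Matrix.diagonal fun v => ((G.degree v : ℝ))⁻¹ := by
    apply Matrix.inv_eq_right_inv
    rw [Matrix.diagonal_mul_diagonal]
    have : (fun v => (G.degree v : ℝ) * ((G.degree v : ℝ))⁻¹) = fun _ => 1 := by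
      funext v; exact mul_inv_cancel₀ (hne v)
    rw [this, Matrix.diagonal_one]
  rw [qform, hinv]
  simp only [dotProduct, Matrix.mulVec, dotProduct, Matrix.mul_diagonal,
    Matrix.diagonal_mul, SimpleGraph.adjMatrix_apply, Finset.mul_sum]
  refine Finset.sum_congr rfl fun u _ => Finset.sum_congr rfl fun v _ => ?_
  by_cases h : G.Adj u v
  · rw [if_pos h, if_pos h]
    field_simp
  · rw [if_neg h, if_neg h]
    simp

end Aux

/-- if `x` is feasible for `(QP)` with `⟨x, D⁻¹ A D⁻¹ x⟩ ≤ 2ε|E|`, then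
for `C = {v : x_v ≥ η·deg v}` one has
`#E(C, V∖C) ≥ ((1-2η)/(1-η) - 2ε/η²)·|E|`. -/
theorem cut_of_heavy_set_ge (G : SimpleGraph V) [DecidableRel G.Adj]
    (hdeg : ∀ v, 0 < G.degree v) (η ε : ℝ) (hη0 : 0 < η) (hη1 : η < 1) (hε : 0 ≤ ε)
    (x : V → ℝ) (hx : feasible G x)
    (hq : qform G x ≤ 2 * ε * (G.edgeFinset.card : ℝ)) :
    ((1 - 2 * η) / (1 - η) - 2 * ε / η ^ 2) * (G.edgeFinset.card : ℝ) ≤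
      (edgesBetween G (Finset.univ.filter (fun v => η * (G.degree v : ℝ) ≤ x v))
        (Finset.univ.filter (fun v => η * (G.degree v : ℝ) ≤ x v))ᶜ : ℝ) := by
  classical
  obtain ⟨hx01, hxsum⟩ := hx
  set C : Finset V := Finset.univ.filter (fun v => η * (G.degree v : ℝ) ≤ x v) with hC
  set m : ℝ := (G.edgeFinset.card : ℝ) with hm
  have hm0 : 0 ≤ m := Nat.cast_nonneg _
  have hdpos : ∀ v, (0:ℝ) < (G.degree v : ℝ) := fun v => by exact_mod_cast hdeg v
  have hmemC : ∀ v, v ∈ C ↔ η * (G.degree v : ℝ) ≤ x v := by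
    intro v; simp [hC]
  set W : ℝ := (edgesWithin G C : ℝ) with hW
  set B : ℝ := (edgesBetween G C Cᶜ : ℝ) with hB
  have hW0 : 0 ≤ W := Nat.cast_nonneg _
  -- degree split: ∑_{v ∈ C} deg v = 2W + B
  have hsplit : ∑ v ∈ C, (G.degree v : ℝ) = 2 * W + B := by
    have hnat : ∑ v ∈ C, G.degree v = 2 * edgesWithin G C + edgesBetween G C Cᶜ := by
      calc ∑ v ∈ C, G.degree v
          = ∑ u ∈ C, ∑ v, (if G.Adj u v then 1 else 0) :=
            Finset.sum_congr rfl fun u _ => deg_eq G u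
        _ = ∑ u ∈ C, ((∑ v ∈ C, (if G.Adj u v then 1 else 0))
              + ∑ v ∈ Cᶜ, (if G.Adj u v then 1 else 0)) :=
            Finset.sum_congr rfl fun u _ => (Finset.sum_add_sum_compl C _).symm
        _ = (∑ u ∈ C, ∑ v ∈ C, (if G.Adj u v then 1 else 0))
              + ∑ u ∈ C, ∑ v ∈ Cᶜ, (if G.Adj u v then 1 else 0) := Finset.sum_add_distrib
        _ = 2 * edgesWithin G C + edgesBetween G C Cᶜ := by
            rw [within_count, between_count]
    have := congrArg (fun n : ℕ => (n : ℝ)) hnat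
    push_cast at this
    simpa using this
  -- quadratic form lower bound: 2 η² W ≤ qform
  have hqlb : 2 * η ^ 2 * W ≤ qform G x := by
    rw [qform_eq G hdeg x]
    have hterm : ∀ u v, (0:ℝ) ≤
        (if G.Adj u v then (x u / (G.degree u : ℝ)) * (x v / (G.degree v : ℝ)) else 0) := by
      intro u v
      split_ifs
      · exact mul_nonneg (div_nonneg (hx01 u).1 (hdpos u).le)
          (div_nonneg (hx01 v).1 (hdpos v).le)
      · exact le_refl 0
    have h1 : (∑ u ∈ C, ∑ v ∈ C, (if G.Adj u v then (1:ℝ) else 0)) = 2 * W := by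
      have := within_count G C
      have := congrArg (fun n : ℕ => (n : ℝ)) this
      push_cast at this
      simpa using this
    have h2 : ∑ u ∈ C, ∑ v ∈ C, (if G.Adj u v then η ^ 2 else 0) = 2 * η ^ 2 * W := by
      rw [show (2:ℝ) * η ^ 2 * W = η ^ 2 * (2 * W) by ring, ← h1, Finset.mul_sum]
      refine Finset.sum_congr rfl fun u _ => ?_
      rw [Finset.mul_sum]
      refine Finset.sum_congr rfl fun v _ => ?_
      split_ifs <;> simp
    have h3 : ∑ u ∈ C, ∑ v ∈ C, (if G.Adj u v then η ^ 2 else 0)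
        ≤ ∑ u ∈ C, ∑ v ∈ C,
          (if G.Adj u v then (x u / (G.degree u : ℝ)) * (x v / (G.degree v : ℝ)) else 0) := by
      refine Finset.sum_le_sum fun u hu => Finset.sum_le_sum fun v hv => ?_
      split_ifs with h
      · have hηu : η ≤ x u / (G.degree u : ℝ) :=
          (le_div_iff₀ (hdpos u)).mpr ((hmemC u).mp hu)
        have hηv : η ≤ x v / (G.degree v : ℝ) :=
          (le_div_iff₀ (hdpos v)).mpr ((hmemC v).mp hv)
        have := mul_le_mul hηu hηv hη0.le
          (le_trans hη0.le hηu)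
        calc η ^ 2 = η * η := sq η
          _ ≤ _ := this
      · exact le_refl 0
    have h4 : ∑ u ∈ C, ∑ v ∈ C,
          (if G.Adj u v then (x u / (G.degree u : ℝ)) * (x v / (G.degree v : ℝ)) else 0)
        ≤ ∑ u, ∑ v,
          (if G.Adj u v then (x u / (G.degree u : ℝ)) * (x v / (G.degree v : ℝ)) else 0) := by
      have hinner : ∀ u, ∑ v ∈ C,
            (if G.Adj u v then (x u / (G.degree u : ℝ)) * (x v / (G.degree v : ℝ)) else 0)
          ≤ ∑ v, (if G.Adj u v then (x u / (G.degree u : ℝ)) * (x v / (G.degree v : ℝ)) else 0) :=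
        fun u => Finset.sum_le_sum_of_subset_of_nonneg (Finset.subset_univ C)
          (fun v _ _ => hterm u v)
      calc ∑ u ∈ C, ∑ v ∈ C, _ ≤ ∑ u ∈ C, ∑ v, (if G.Adj u v then
              (x u / (G.degree u : ℝ)) * (x v / (G.degree v : ℝ)) else 0) :=
            Finset.sum_le_sum fun u _ => hinner u
        _ ≤ _ := Finset.sum_le_sum_of_subset_of_nonneg (Finset.subset_univ C)
            (fun u _ _ => Finset.sum_nonneg fun v _ => hterm u v)
    linarith [h2, h3, h4]
  -- η² W ≤ ε m
  have hub : η ^ 2 * W ≤ ε * m := by nlinarith [hqlb, hq]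
  -- degree sums
  have hdegsum : ∑ v, (G.degree v : ℝ) = 2 * m := by
    rw [hm]
    exact_mod_cast congrArg (fun n : ℕ => (n : ℝ)) G.sum_degrees_eq_twice_card_edges
  set S : ℝ := ∑ v ∈ C, (G.degree v : ℝ) with hSdef
  have hScompl : S + ∑ v ∈ Cᶜ, (G.degree v : ℝ) = 2 * m := by
    rw [hSdef, Finset.sum_add_sum_compl, hdegsum]
  have hxC : ∑ v ∈ C, x v ≤ S :=
    Finset.sum_le_sum fun v _ => (hx01 v).2
  have hxCc : ∑ v ∈ Cᶜ, x v ≤ η * ∑ v ∈ Cᶜ, (G.degree v : ℝ) := by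
    rw [Finset.mul_sum]
    refine Finset.sum_le_sum fun v hv => ?_
    have : ¬ (η * (G.degree v : ℝ) ≤ x v) := by
      intro h
      exact (Finset.mem_compl.mp hv) ((hmemC v).mpr h)
    linarith [lt_of_not_ge this]
  have hsum_split : ∑ v ∈ C, x v + ∑ v ∈ Cᶜ, x v = ∑ v, x v :=
    Finset.sum_add_sum_compl C x
  have hmS : m ≤ S + η * (2 * m - S) := by
    have h5 : ∑ v ∈ Cᶜ, (G.degree v : ℝ) = 2 * m - S := by linarith
    rw [← h5]
    calc m ≤ ∑ v, x v := hxsum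
      _ = ∑ v ∈ C, x v + ∑ v ∈ Cᶜ, x v := hsum_split.symm
      _ ≤ S + η * ∑ v ∈ Cᶜ, (G.degree v : ℝ) := by linarith [hxC, hxCc]
  have hS' : (1 - 2 * η) * m ≤ (1 - η) * S := by nlinarith [hmS]
  have h6 : (1 - 2 * η) / (1 - η) * m ≤ S := by
    rw [div_mul_eq_mul_div, div_le_iff₀ (by linarith : (0:ℝ) < 1 - η)]
    nlinarith [hS']
  have h7 : 2 * W ≤ 2 * ε / η ^ 2 * m := by
    rw [div_mul_eq_mul_div, le_div_iff₀ (by positivity : (0:ℝ) < η ^ 2)]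
    nlinarith [hub]
  calc ((1 - 2 * η) / (1 - η) - 2 * ε / η ^ 2) * m
      = (1 - 2 * η) / (1 - η) * m - 2 * ε / η ^ 2 * m := by ring
    _ ≤ S - 2 * W := by linarith
    _ = B := by linarith [hsplit]
end

section
/- Main Theorem: Let G = (V,E) be a finite simple graph with every vertex of positive degree, let x ∈ ℝ^n be a solution of (QP), and define C = {v ∈ V : x_v ≥ 0.23 · deg(v)}. If MaxCut(G) ≥ 0.995 · |E|, then #E(C, V∖C) ≥ 0.502 · MaxCut(G). -/
open Finset Matrix BigOperators

variable {V : Type*} [Fintype V] [DecidableEq V]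

section Aux

variable (G : SimpleGraph V) [DecidableRel G.Adj]

def aI (u v : V) : ℝ := if G.Adj u v then 1 else 0

omit [Fintype V] [DecidableEq V] in
lemma aI_nonneg (u v : V) : 0 ≤ aI G u v := by
  unfold aI; split_ifs <;> norm_num

omit [Fintype V] [DecidableEq V] in
lemma aI_symm (u v : V) : aI G u v = aI G v u := by
  simp [aI, G.adj_comm]

omit [DecidableEq V] in
lemma sum_aI (u : V) : ∑ v, aI G u v = (G.degree u : ℝ) := by
  simp [aI, Finset.sum_boole, SimpleGraph.degree, SimpleGraph.neighborFinset_eq_filter]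

lemma edgesBetween_eq_sum {S T : Finset V} (h : Disjoint S T) :
    (edgesBetween G S T : ℝ) = ∑ u ∈ S, ∑ v ∈ T, aI G u v := by
  have hcard : ((S ×ˢ T).filter fun p => G.Adj p.1 p.2).card = edgesBetween G S T := by
    unfold edgesBetween
    refine Finset.card_bij (fun (p : V × V) _ => Sym2.mk p.1 p.2) ?_ ?_ ?_
    · rintro ⟨u, v⟩ hp
      simp only [Finset.mem_filter, Finset.mem_product] at hp
      obtain ⟨⟨hu, hv⟩, hadj⟩ := hp
      simp only [edgesBetween, Finset.mem_filter, SimpleGraph.mem_edgeFinset]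
      exact ⟨hadj, u, hu, v, hv, rfl⟩
    · rintro ⟨u, v⟩ h1 ⟨u', v'⟩ h2 he
      simp only [Finset.mem_filter, Finset.mem_product] at h1 h2
      have := Sym2.eq_iff.mp he
      rcases this with ⟨rfl, rfl⟩ | ⟨rfl, rfl⟩
      · rfl
      · exact absurd h2.1.2 (Finset.disjoint_left.mp h h1.1.1)
    · intro e he
      simp only [edgesBetween, Finset.mem_filter, SimpleGraph.mem_edgeFinset] at he
      obtain ⟨hee, a, ha, b, hb, rfl⟩ := he
      refine ⟨(a, b), ?_, rfl⟩
      simp only [Finset.mem_filter, Finset.mem_product]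
      exact ⟨⟨ha, hb⟩, (SimpleGraph.mem_edgeSet G).mp hee⟩
  rw [← hcard]
  rw [Finset.card_filter]
  push_cast
  rw [Finset.sum_product]
  refine Finset.sum_congr rfl fun u _ => Finset.sum_congr rfl fun v _ => ?_
  simp [aI]

lemma qform_eq_sum (hdeg : ∀ v, 0 < G.degree v) (x : V → ℝ) :
    qform G x = ∑ u, ∑ v, aI G u v * (x u / (G.degree u : ℝ)) * (x v / (G.degree v : ℝ)) := by
  have hne : ∀ v, ((G.degree v : ℝ)) ≠ 0 := fun v => Nat.cast_ne_zero.mpr (hdeg v).ne'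
  have hinv : (Matrix.diagonal fun v => (G.degree v : ℝ))⁻¹
      = Matrix.diagonal fun v => ((G.degree v : ℝ))⁻¹ := by
    apply Matrix.inv_eq_right_inv
    rw [Matrix.diagonal_mul_diagonal]
    convert Matrix.diagonal_one with v
    exact mul_inv_cancel₀ (hne v)
  rw [qform, hinv]
  simp only [dotProduct, Matrix.mulVec, Matrix.mul_diagonal, Matrix.diagonal_mul,
    SimpleGraph.adjMatrix_apply]
  refine Finset.sum_congr rfl fun u _ => ?_
  rw [Finset.mul_sum]
  refine Finset.sum_congr rfl fun v _ => ?_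
  simp only [aI, div_eq_mul_inv]
  ring

/-- degree sum over a set splits as inside-pairs plus cut -/
lemma deg_split (S : Finset V) :
    ∑ v ∈ S, (G.degree v : ℝ)
      = (∑ u ∈ S, ∑ v ∈ S, aI G u v) + (edgesBetween G S Sᶜ : ℝ) := by
  rw [edgesBetween_eq_sum G disjoint_compl_right, ← Finset.sum_add_distrib]
  refine Finset.sum_congr rfl fun u _ => ?_
  rw [Finset.sum_add_sum_compl S (aI G u), sum_aI]

lemma edgesBetween_comm (S T : Finset V) (h : Disjoint S T) :
    (edgesBetween G T S : ℝ) = (edgesBetween G S T : ℝ) := by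
  rw [edgesBetween_eq_sum G h.symm, edgesBetween_eq_sum G h, Finset.sum_comm]
  exact Finset.sum_congr rfl fun u _ => Finset.sum_congr rfl fun v _ => (aI_symm G u v).symm

end Aux


/-- Main Theorem: if `x` solves `(QP)`,
`C = {v : x_v ≥ 0.23·deg v}`, and `MaxCut(G) ≥ 0.995·|E|`, then
`#E(C, V∖C) ≥ 0.502·MaxCut(G)`. -/
theorem main_theorem (G : SimpleGraph V) [DecidableRel G.Adj]
    (hdeg : ∀ v, 0 < G.degree v) (x : V → ℝ) (hx : isQPSolution G x)
    (hmc : (0.995 : ℝ) * (G.edgeFinset.card : ℝ) ≤ (maxCut G : ℝ)) :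
    (0.502 : ℝ) * (maxCut G : ℝ) ≤
      (edgesBetween G (Finset.univ.filter (fun v => (0.23 : ℝ) * (G.degree v : ℝ) ≤ x v))
        (Finset.univ.filter (fun v => (0.23 : ℝ) * (G.degree v : ℝ) ≤ x v))ᶜ : ℝ) := by
  classical
  obtain ⟨⟨hbox, hsum⟩, hmin⟩ := hx
  have hd0 : ∀ v, (0:ℝ) < (G.degree v : ℝ) := fun v => Nat.cast_pos.mpr (hdeg v)
  set m' : ℝ := (G.edgeFinset.card : ℝ) with hm'
  set M' : ℝ := (maxCut G : ℝ) with hM'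
  set C : Finset V := Finset.univ.filter (fun v => (0.23 : ℝ) * (G.degree v : ℝ) ≤ x v) with hC
  -- total degree
  have htot : ∑ v, (G.degree v : ℝ) = 2 * m' := by
    rw [hm']
    exact_mod_cast G.sum_degrees_eq_twice_card_edges
  -- maxCut is at most the number of edges
  have hMm : M' ≤ m' := by
    rw [hM', hm']
    exact_mod_cast Finset.sup_le fun S _ => Finset.card_filter_le _ _
  -- maxCut is attained by some S with sum of degrees at least m'
  obtain ⟨S, hcutS, hDS⟩ : ∃ S : Finset V,
      (edgesBetween G S Sᶜ : ℝ) = M' ∧ m' ≤ ∑ v ∈ S, (G.degree v : ℝ) := by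
    obtain ⟨S₀, -, hS₀⟩ := Finset.exists_mem_eq_sup (Finset.univ : Finset (Finset V))
      ⟨∅, Finset.mem_univ ∅⟩ (fun S => edgesBetween G S Sᶜ)
    have hval : (edgesBetween G S₀ S₀ᶜ : ℝ) = M' := by rw [hM', maxCut, hS₀]
    by_cases hbig : m' ≤ ∑ v ∈ S₀, (G.degree v : ℝ)
    · exact ⟨S₀, hval, hbig⟩
    · refine ⟨S₀ᶜ, ?_, ?_⟩
      · rw [compl_compl]
        rw [edgesBetween_comm G S₀ S₀ᶜ disjoint_compl_right]
        exact hval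
      · have hsplit := Finset.sum_add_sum_compl S₀ (fun v => (G.degree v : ℝ))
        rw [htot] at hsplit
        push_neg at hbig
        linarith
  -- the candidate: degrees on S, zero elsewhere
  set xS : V → ℝ := fun v => if v ∈ S then (G.degree v : ℝ) else 0 with hxS
  have hfeas : feasible G xS := by
    constructor
    · intro v
      by_cases h : v ∈ S <;> simp [hxS, h, (hd0 v).le]
    · have : ∑ v, xS v = ∑ v ∈ S, (G.degree v : ℝ) := by
        rw [hxS]
        rw [Finset.sum_ite_mem, Finset.univ_inter]
      rw [this]
      exact hDS
  set NSS : ℝ := ∑ u ∈ S, ∑ v ∈ S, aI G u v with hNSS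
  have hqxS : qform G xS = NSS := by
    rw [qform_eq_sum G hdeg]
    have hterm : ∀ u v : V,
        aI G u v * (xS u / (G.degree u : ℝ)) * (xS v / (G.degree v : ℝ))
        = if u ∈ S then (if v ∈ S then aI G u v else 0) else 0 := by
      intro u v
      by_cases hu : u ∈ S <;> by_cases hv : v ∈ S <;>
        simp [hxS, hu, hv, div_self (hd0 u).ne', div_self (hd0 v).ne']
    calc ∑ u, ∑ v, aI G u v * (xS u / (G.degree u : ℝ)) * (xS v / (G.degree v : ℝ))
        = ∑ u, ∑ v, if u ∈ S then (if v ∈ S then aI G u v else 0) else 0 := by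
          exact Finset.sum_congr rfl fun u _ => Finset.sum_congr rfl fun v _ => hterm u v
      _ = ∑ u, if u ∈ S then (∑ v, if v ∈ S then aI G u v else 0) else 0 := by
          refine Finset.sum_congr rfl fun u _ => ?_
          by_cases hu : u ∈ S <;> simp [hu]
      _ = NSS := by
          rw [Finset.sum_ite_mem, Finset.univ_inter, hNSS]
          refine Finset.sum_congr rfl fun u _ => ?_
          rw [Finset.sum_ite_mem, Finset.univ_inter]
  -- upper bound on the optimum
  have hDSsplit := deg_split G S
  have hDScsplit := deg_split G Sᶜ
  have hcutSc : (edgesBetween G Sᶜ Sᶜᶜ : ℝ) = M' := by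
    rw [compl_compl, edgesBetween_comm G S Sᶜ disjoint_compl_right, hcutS]
  have hAScSc : (0:ℝ) ≤ ∑ u ∈ Sᶜ, ∑ v ∈ Sᶜ, aI G u v :=
    Finset.sum_nonneg fun u _ => Finset.sum_nonneg fun v _ => aI_nonneg G u v
  have hScsum : ∑ v ∈ Sᶜ, (G.degree v : ℝ) = 2 * m' - ∑ v ∈ S, (G.degree v : ℝ) := by
    have := Finset.sum_add_sum_compl S (fun v => (G.degree v : ℝ))
    rw [htot] at this
    linarith
  -- qform x ≤ NSS = (∑_{S} deg) - M' ≤ 2 m' - 2 M'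
  have hqx_le : qform G x ≤ 2 * m' - 2 * M' := by
    have h1 : qform G x ≤ NSS := hqxS ▸ hmin xS hfeas
    rw [hcutS] at hDSsplit
    rw [hcutSc, hScsum] at hDScsplit
    rw [← hNSS] at hDSsplit
    linarith [hDSsplit, hDScsplit, hAScSc, h1]
  -- lower bound the qform by edges within C
  have hy01 : ∀ v, 0 ≤ x v / (G.degree v : ℝ) ∧ x v / (G.degree v : ℝ) ≤ 1 := by
    intro v
    constructor
    · exact div_nonneg (hbox v).1 (hd0 v).le
    · rw [div_le_one (hd0 v)]
      exact (hbox v).2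
  have hyC : ∀ v ∈ C, (0.23 : ℝ) ≤ x v / (G.degree v : ℝ) := by
    intro v hv
    rw [hC, Finset.mem_filter] at hv
    rw [le_div_iff₀ (hd0 v)]
    simpa [mul_comm] using hv.2
  set NCC : ℝ := ∑ u ∈ C, ∑ v ∈ C, aI G u v with hNCC
  have hNCCbound : 0.0529 * NCC ≤ qform G x := by
    rw [qform_eq_sum G hdeg, hNCC, Finset.mul_sum]
    have hterm_nonneg : ∀ u v : V,
        0 ≤ aI G u v * (x u / (G.degree u : ℝ)) * (x v / (G.degree v : ℝ)) := fun u v =>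
      mul_nonneg (mul_nonneg (aI_nonneg G u v) (hy01 u).1) (hy01 v).1
    calc ∑ u ∈ C, 0.0529 * ∑ v ∈ C, aI G u v
        ≤ ∑ u ∈ C, ∑ v ∈ C, aI G u v * (x u / (G.degree u : ℝ)) * (x v / (G.degree v : ℝ)) := by
          refine Finset.sum_le_sum fun u hu => ?_
          rw [Finset.mul_sum]
          refine Finset.sum_le_sum fun v hv => ?_
          have h1 := hyC u hu
          have h2 := hyC v hv
          have ha := aI_nonneg G u v
          have h5 : (0.0529:ℝ) ≤ (x u / (G.degree u : ℝ)) * (x v / (G.degree v : ℝ)) := by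
            nlinarith [h1, h2]
          calc (0.0529:ℝ) * aI G u v = aI G u v * 0.0529 := by ring
            _ ≤ aI G u v * ((x u / (G.degree u : ℝ)) * (x v / (G.degree v : ℝ))) :=
                mul_le_mul_of_nonneg_left h5 ha
            _ = aI G u v * (x u / (G.degree u : ℝ)) * (x v / (G.degree v : ℝ)) := by ring
      _ ≤ ∑ u ∈ C, ∑ v, aI G u v * (x u / (G.degree u : ℝ)) * (x v / (G.degree v : ℝ)) := by
          refine Finset.sum_le_sum fun u _ => ?_
          exact Finset.sum_le_sum_of_subset_of_nonneg (Finset.subset_univ C)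
            (fun v _ _ => hterm_nonneg u v)
      _ ≤ ∑ u, ∑ v, aI G u v * (x u / (G.degree u : ℝ)) * (x v / (G.degree v : ℝ)) := by
          exact Finset.sum_le_sum_of_subset_of_nonneg (Finset.subset_univ C)
            (fun u _ _ => Finset.sum_nonneg fun v _ => hterm_nonneg u v)
  -- lower bound the degree sum of C
  have hDC : (0.77 : ℝ) * ∑ v ∈ C, (G.degree v : ℝ) ≥ 0.54 * m' := by
    have hxC : ∑ v ∈ C, x v ≤ ∑ v ∈ C, (G.degree v : ℝ) :=
      Finset.sum_le_sum fun v _ => (hbox v).2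
    have hxCc : ∑ v ∈ Cᶜ, x v ≤ 0.23 * ∑ v ∈ Cᶜ, (G.degree v : ℝ) := by
      rw [Finset.mul_sum]
      refine Finset.sum_le_sum fun v hv => ?_
      rw [Finset.mem_compl, hC, Finset.mem_filter] at hv
      push_neg at hv
      exact (hv (Finset.mem_univ v)).le
    have hCcsum : ∑ v ∈ Cᶜ, (G.degree v : ℝ) = 2 * m' - ∑ v ∈ C, (G.degree v : ℝ) := by
      have := Finset.sum_add_sum_compl C (fun v => (G.degree v : ℝ))
      rw [htot] at this
      linarith
    have hsplitx := Finset.sum_add_sum_compl C x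
    rw [hCcsum] at hxCc
    have hsum' : m' ≤ ∑ v, x v := hsum
    linarith
  -- the cut of C
  have hCsplit := deg_split G C
  rw [← hNCC] at hCsplit
  -- final arithmetic
  have hmcM : (0.995 : ℝ) * m' ≤ M' := hmc
  linarith [hqx_le, hNCCbound, hDC, hCsplit, hMm, hmcM]
end

section
/- For η = (5 − √13)/6, the minimum over ε ∈ [0, 1/2] of max{ 1/(2−2ε), ((1 − 2η)/(1 − η) − 2ε/η²) · 1/(1−ε) } equals (23 + 13√13)/139. -/
open Finset Matrix BigOperators

variable {V : Type*} [Fintype V] [DecidableEq V]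

/-- The parameter `η = (5 - √13)/6`. -/
noncomputable def η₀ : ℝ := (5 - Real.sqrt 13) / 6


lemma hs13 : Real.sqrt 13 ^ 2 = 13 := Real.sq_sqrt (by norm_num)
lemma hs3' : 3 < Real.sqrt 13 := (Real.lt_sqrt (by norm_num)).mpr (by norm_num)
lemma hs4' : Real.sqrt 13 < 4 := by
  rw [show (4:ℝ) = Real.sqrt 16 by rw [show (16:ℝ) = 4^2 by norm_num, Real.sqrt_sq]; norm_num]
  exact Real.sqrt_lt_sqrt (by norm_num) (by norm_num)

lemma key_expr (ε : ℝ) :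
    (1 - 2 * η₀) / (1 - η₀) - 2 * ε / η₀ ^ 2
      = (5 - Real.sqrt 13) / 2 - (19 + 5 * Real.sqrt 13) * ε := by
  have hs := hs13
  have h3 := hs3'
  have h4 := hs4'
  set s := Real.sqrt 13 with hsdef
  have hη : η₀ = (5 - s) / 6 := rfl
  have h1 : (1 : ℝ) - η₀ ≠ 0 := by rw [hη]; intro h; nlinarith
  have h2 : η₀ ≠ 0 := by rw [hη]; intro h; nlinarith
  have hA : (1 - 2 * η₀) / (1 - η₀) = (5 - s) / 2 := by
    rw [div_eq_div_iff h1 two_ne_zero, hη]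
    linear_combination (1/6 : ℝ) * hs
  have hB : 2 * ε / η₀ ^ 2 = (19 + 5 * s) * ε := by
    rw [div_eq_iff (pow_ne_zero 2 h2), hη]
    linear_combination (ε * (31 - 5*s) / 36) * hs
  rw [hA, hB]

/-- for `η = (5-√13)/6`, the minimum over `ε ∈ [0, 1/2]` of
`max{1/(2-2ε), ((1-2η)/(1-η) - 2ε/η²)·1/(1-ε)}` equals `(23 + 13√13)/139`. -/
theorem optimal_constant :
    IsLeast {y : ℝ | ∃ ε : ℝ, 0 ≤ ε ∧ ε ≤ 1 / 2 ∧
        y = max (1 / (2 - 2 * ε))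
          (((1 - 2 * η₀) / (1 - η₀) - 2 * ε / η₀ ^ 2) * (1 / (1 - ε)))}
      ((23 + 13 * Real.sqrt 13) / 139) := by
  have hs := hs13
  have h3 := hs3'
  have h4 := hs4'
  set s := Real.sqrt 13 with hsdef
  constructor
  · refine ⟨(47 - 13 * s) / 24, by nlinarith, by nlinarith, ?_⟩
    rw [key_expr]
    have h1 : (1:ℝ) / (2 - 2 * ((47 - 13 * s) / 24)) = (23 + 13 * s) / 139 := by
      rw [div_eq_div_iff (by nlinarith) (by norm_num)]
      linear_combination (-169/12 : ℝ) * hs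
    have h2 : ((5 - s) / 2 - (19 + 5 * s) * ((47 - 13 * s) / 24))
        * (1 / (1 - (47 - 13 * s) / 24)) = (23 + 13 * s) / 139 := by
      rw [mul_one_div, div_eq_div_iff (by nlinarith) (by norm_num : (139:ℝ) ≠ 0)]
      linear_combination (4433/12 : ℝ) * hs
    rw [h1, h2, max_self]
  · rintro y ⟨ε, h0, h12, rfl⟩
    rcases le_or_gt ε ((47 - 13 * s) / 24) with hc | hc
    · apply le_max_of_le_right
      rw [key_expr]
      have h1ε : (0:ℝ) < 1 - ε := by linarith
      rw [mul_one_div, le_div_iff₀ h1ε]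
      have hd : 0 ≤ (47 - 13 * s) / 24 - ε := by linarith
      nlinarith [hs, hd, mul_nonneg hd (by linarith : (0:ℝ) ≤ s)]
    · apply le_max_of_le_left
      rw [le_div_iff₀ (by linarith)]
      have hd : 0 ≤ ε - (47 - 13 * s) / 24 := by linarith
      nlinarith [hs, hd, mul_nonneg hd (by linarith : (0:ℝ) ≤ s)]
end
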